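/- Let (Ω, F, P) be a probability space, let L²(Ω; ℝᵏ) denote the Hilbert space of (equivalence classes of) square-integrable ℝᵏ-valued random vectors on it, and let Q₁ and Q₂ be symmetric real k×k matrices such that Q₁ and Q₁ + Q₂ are positive semidefinite. Then the functional f : L²(Ω; ℝᵏ) → ℝ defined by f(u) = E[⟨Q₁u, u⟩] + ⟨Q₂E[u], E[u]⟩ is convex. -/

import Mathlib

open MeasureTheory Matrix RealInnerProductSpace

/-! A quadratic form `q` on a real vector space is convex as soon as it is nonnegative, because
`a q x + b q y - q (a x + b y) = a b q (x - y)` whenever `a + b = 1`. The functional is such a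
form on `L²`, and it is nonnegative by Jensen's inequality for the (hence convex) form
`x ↦ ⟪Q₁ x, x⟫`: `E⟪Q₁ u, u⟫ + ⟪Q₂ E u, E u⟫ ≥ ⟪(Q₁ + Q₂) E u, E u⟫ ≥ 0`. -/

namespace QuadraticMap

variable {E : Type*} [AddCommGroup E] [Module ℝ E]

theorem smul_add_smul_sub_map_smul_add_smul (Q : QuadraticMap ℝ E ℝ) (x y : E) {a b : ℝ}
    (hab : a + b = 1) :
    a * Q x + b * Q y - Q (a • x + b • y) = a * b * Q (x - y) := by
  have hcomb : Q (a • x + b • y) = a * a * Q x + b * b * Q y + a * b * polar Q x y := by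
    calc Q (a • x + b • y) = Q (a • x) + Q (b • y) + polar Q (a • x) (b • y) := by
          rw [polar]; ring
      _ = _ := by
          rw [QuadraticMap.map_smul, QuadraticMap.map_smul, polar_smul_left, polar_smul_right]
          simp only [smul_eq_mul]; ring
  have hdiff : Q (x - y) = Q x + Q y - polar Q x y := by
    calc Q (x - y) = Q x + Q (-y) + polar Q x (-y) := by rw [polar, sub_eq_add_neg]; ring
      _ = _ := by rw [QuadraticMap.map_neg, polar_neg_right]; ring
  obtain rfl : b = 1 - a := by linarith
  rw [hcomb, hdiff]
  ring

theorem convexOn_univ_of_nonneg (Q : QuadraticMap ℝ E ℝ) (hQ : ∀ x, 0 ≤ Q x) :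
    ConvexOn ℝ Set.univ Q := by
  refine ⟨convex_univ, fun x _ y _ a b ha hb hab => ?_⟩
  have := Q.smul_add_smul_sub_map_smul_add_smul x y hab
  simp only [smul_eq_mul]
  linarith [mul_nonneg (mul_nonneg ha hb) (hQ (x - y))]

end QuadraticMap

namespace LinearMap

variable {V : Type*} [NormedAddCommGroup V] [InnerProductSpace ℝ V]

noncomputable def innerQuadraticMap (T : V →ₗ[ℝ] V) : QuadraticMap ℝ V ℝ :=
  LinearMap.BilinMap.toQuadraticMap ((innerₗ V).comp T)

@[simp]
theorem innerQuadraticMap_apply (T : V →ₗ[ℝ] V) (x : V) : T.innerQuadraticMap x = ⟪T x, x⟫ :=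
  rfl

end LinearMap

theorem ContinuousLinearMap.inner_map_integral_le_integral_inner_map {Ω : Type*}
    [MeasurableSpace Ω] {μ : Measure Ω} [IsProbabilityMeasure μ]
    {V : Type*} [NormedAddCommGroup V] [InnerProductSpace ℝ V] [CompleteSpace V]
    {T : V →L[ℝ] V} (hT : ∀ x, 0 ≤ ⟪T x, x⟫) {X : Ω → V} (hX : Integrable X μ)
    (hTX : Integrable (fun ω => ⟪T (X ω), X ω⟫) μ) :
    ⟪T (∫ ω, X ω ∂μ), ∫ ω, X ω ∂μ⟫ ≤ ∫ ω, ⟪T (X ω), X ω⟫ ∂μ :=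
  ((T : V →ₗ[ℝ] V).innerQuadraticMap.convexOn_univ_of_nonneg hT).map_integral_le
    (T.continuous.inner continuous_id).continuousOn isClosed_univ (by simp) hX hTX

namespace MeasureTheory

variable {Ω : Type*} [MeasurableSpace Ω] {μ : Measure Ω}
  {V : Type*} [NormedAddCommGroup V] [InnerProductSpace ℝ V]

noncomputable def Lp.integralₗ {E : Type*} [NormedAddCommGroup E] [NormedSpace ℝ E]
    (p : ENNReal) [Fact (1 ≤ p)] (μ : Measure Ω) [IsFiniteMeasure μ] : Lp E p μ →ₗ[ℝ] E where
  toFun u := ∫ ω, u ω ∂μ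
  map_add' u v := by
    rw [integral_congr_ae (Lp.coeFn_add u v)]
    exact integral_add ((Lp.memLp u).integrable Fact.out) ((Lp.memLp v).integrable Fact.out)
  map_smul' c u := by
    rw [integral_congr_ae (Lp.coeFn_smul c u)]
    exact integral_smul c _

@[simp]
theorem Lp.integralₗ_apply {E : Type*} [NormedAddCommGroup E] [NormedSpace ℝ E] {p : ENNReal}
    [Fact (1 ≤ p)] [IsFiniteMeasure μ] (u : Lp E p μ) : Lp.integralₗ p μ u = ∫ ω, u ω ∂μ :=
  rfl

theorem L2.inner_compLp_self (T : V →L[ℝ] V) (u : Lp V 2 μ) :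
    ⟪T.compLp u, u⟫ = ∫ ω, ⟪T (u ω), u ω⟫ ∂μ := by
  rw [L2.inner_def]
  refine integral_congr_ae ?_
  filter_upwards [T.coeFn_compLp u] with ω hω
  rw [hω]

theorem L2.integrable_inner_map_self (T : V →L[ℝ] V) (u : Lp V 2 μ) :
    Integrable (fun ω => ⟪T (u ω), u ω⟫) μ := by
  refine (L2.integrable_inner (T.compLp u) u).congr ?_
  filter_upwards [T.coeFn_compLp u] with ω hω
  rw [hω]

noncomputable def meanFieldQuadraticMap (T₁ T₂ : V →L[ℝ] V) (μ : Measure Ω) [IsFiniteMeasure μ] :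
    QuadraticMap ℝ (Lp V 2 μ) ℝ :=
  (T₁.compLpₗ 2 μ).innerQuadraticMap + (T₂ : V →ₗ[ℝ] V).innerQuadraticMap.comp (Lp.integralₗ 2 μ)

theorem meanFieldQuadraticMap_apply (T₁ T₂ : V →L[ℝ] V) [IsFiniteMeasure μ] (u : Lp V 2 μ) :
    meanFieldQuadraticMap T₁ T₂ μ u
      = ∫ ω, ⟪T₁ (u ω), u ω⟫ ∂μ + ⟪T₂ (∫ ω, u ω ∂μ), ∫ ω, u ω ∂μ⟫ := by
  simp [meanFieldQuadraticMap, L2.inner_compLp_self]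

theorem meanFieldQuadraticMap_nonneg [CompleteSpace V] [IsProbabilityMeasure μ]
    {T₁ T₂ : V →L[ℝ] V} (h₁ : ∀ x, 0 ≤ ⟪T₁ x, x⟫) (h₁₂ : ∀ x, 0 ≤ ⟪(T₁ + T₂) x, x⟫)
    (u : Lp V 2 μ) : 0 ≤ meanFieldQuadraticMap T₁ T₂ μ u := by
  set m := ∫ ω, u ω ∂μ
  have hJensen : ⟪T₁ m, m⟫ ≤ ∫ ω, ⟪T₁ (u ω), u ω⟫ ∂μ :=
    T₁.inner_map_integral_le_integral_inner_map h₁ ((Lp.memLp u).integrable one_le_two)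
      (L2.integrable_inner_map_self T₁ u)
  calc 0 ≤ ⟪(T₁ + T₂) m, m⟫ := h₁₂ m
    _ = ⟪T₁ m, m⟫ + ⟪T₂ m, m⟫ := by rw [_root_.add_apply, inner_add_left]
    _ ≤ meanFieldQuadraticMap T₁ T₂ μ u := by rw [meanFieldQuadraticMap_apply]; linarith

end MeasureTheory

theorem meanField_quadratic_convex_general
    {Ω : Type*} [MeasurableSpace Ω] (μ : Measure Ω) [IsProbabilityMeasure μ]
    {k : ℕ} (Q₁ Q₂ : Matrix (Fin k) (Fin k) ℝ)
    (hQ₁ : Q₁.PosSemidef) (hQ₁₂ : (Q₁ + Q₂).PosSemidef)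
    (f : Lp (EuclideanSpace ℝ (Fin k)) 2 μ → ℝ)
    (hf : ∀ u : Lp (EuclideanSpace ℝ (Fin k)) 2 μ,
      f u = (∫ ω, ⟪Matrix.toEuclideanLin Q₁ (u ω), u ω⟫ ∂μ)
        + ⟪Matrix.toEuclideanLin Q₂ (∫ ω, u ω ∂μ), ∫ ω, u ω ∂μ⟫) :
    ConvexOn ℝ (Set.univ : Set (Lp (EuclideanSpace ℝ (Fin k)) 2 μ)) f := by
  have hf_eq :
      f = meanFieldQuadraticMap (toEuclideanCLM (𝕜 := ℝ) Q₁) (toEuclideanCLM (𝕜 := ℝ) Q₂) μ := by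
    funext u
    rw [hf, meanFieldQuadraticMap_apply]
    rfl
  rw [hf_eq]
  refine QuadraticMap.convexOn_univ_of_nonneg _ (meanFieldQuadraticMap_nonneg ?_ ?_)
  · exact (isPositive_toEuclideanLin_iff.mpr hQ₁).inner_nonneg_left
  · rw [← map_add]
    exact (isPositive_toEuclideanLin_iff.mpr hQ₁₂).inner_nonneg_left

/-- Convexity of the mean-field quadratic functional
`f(u) = E[⟨Q₁u, u⟩] + ⟨Q₂ E[u], E[u]⟩` on `L²(Ω; ℝᵏ)`, when `Q₁`, `Q₂` are
symmetric and `Q₁`, `Q₁ + Q₂` are positive semidefinite. -/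
theorem meanField_quadratic_convex
    {Ω : Type*} [MeasurableSpace Ω] (μ : Measure Ω) [IsProbabilityMeasure μ]
    {k : ℕ} (Q₁ Q₂ : Matrix (Fin k) (Fin k) ℝ)
    (hQ₁s : Q₁.IsSymm) (hQ₂s : Q₂.IsSymm)
    (hQ₁ : Q₁.PosSemidef) (hQ₁₂ : (Q₁ + Q₂).PosSemidef)
    (f : Lp (EuclideanSpace ℝ (Fin k)) 2 μ → ℝ)
    (hf : ∀ u : Lp (EuclideanSpace ℝ (Fin k)) 2 μ,
      f u = (∫ ω, ⟪Matrix.toEuclideanLin Q₁ (u ω), u ω⟫ ∂μ)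
        + ⟪Matrix.toEuclideanLin Q₂ (∫ ω, u ω ∂μ), ∫ ω, u ω ∂μ⟫) :
    ConvexOn ℝ (Set.univ : Set (Lp (EuclideanSpace ℝ (Fin k)) 2 μ)) f :=
  meanField_quadratic_convex_general μ Q₁ Q₂ hQ₁ hQ₁₂ f hf
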